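/- arXiv:2103.13338 — 2 statements merged into one kernel-verified Lean document; each statement's English description precedes it below -/
import Mathlib

section
/- Let F, M(t) be n×n real matrices with M(t) = Θ(t)ᵀΘ(t) symmetric positive definite and Θ(t) invertible and differentiable. If FᵀM + MF + Ṁ ≤ -2α M (in the Loewner order) for some α > 0, then the generalized Jacobian F_g = (Θ̇ + ΘF)Θ⁻¹ satisfies λ_max((F_g + F_gᵀ)/2) ≤ -α. -/
open Matrix

theorem basic_contraction_generalized_jacobian
    (n : ℕ) (F Θ Θdot : Matrix (Fin n) (Fin n) ℝ) (α : ℝ) (hα : 0 < α)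
    (hΘ : IsUnit Θ)
    (M Mdot Fg : Matrix (Fin n) (Fin n) ℝ)
    (hM : M = Θᵀ * Θ)
    (hMdot : Mdot = Θdotᵀ * Θ + Θᵀ * Θdot)
    (hFg : Fg = (Θdot + Θ * F) * Θ⁻¹)
    (hcontract : ((-(2 * α)) • M - (Fᵀ * M + M * F + Mdot)).PosSemidef)
    (hsym : ((1 / 2 : ℝ) • (Fg + Fgᵀ)).IsHermitian) :
    ∀ i, hsym.eigenvalues i ≤ -α := by
  have hdet : IsUnit Θ.det := (Matrix.isUnit_iff_isUnit_det Θ).mp hΘ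
  have hinv : Θ⁻¹ * Θ = 1 := Matrix.nonsing_inv_mul Θ hdet
  have hinv' : Θ * Θ⁻¹ = 1 := Matrix.mul_nonsing_inv Θ hdet
  -- key algebraic identity
  have key : Θᵀ * ((-(2 * α)) • (1 : Matrix (Fin n) (Fin n) ℝ) - (Fg + Fgᵀ)) * Θ
      = (-(2 * α)) • M - (Fᵀ * M + M * F + Mdot) := by
    have hFgΘ : Fg * Θ = Θdot + Θ * F := by
      rw [hFg, Matrix.mul_assoc, hinv, Matrix.mul_one]
    have h1 : Θᵀ * Fg * Θ = Θᵀ * Θdot + M * F := by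
      rw [Matrix.mul_assoc, hFgΘ, hM]
      noncomm_ring
    have h2 : Θᵀ * Fgᵀ * Θ = Θdotᵀ * Θ + Fᵀ * M := by
      have ht : Θᵀ * Fgᵀ = Θdotᵀ + Fᵀ * Θᵀ := by
        calc Θᵀ * Fgᵀ = (Fg * Θ)ᵀ := by rw [Matrix.transpose_mul]
          _ = Θdotᵀ + Fᵀ * Θᵀ := by rw [hFgΘ]; simp [Matrix.transpose_add, Matrix.transpose_mul]
      rw [ht, hM]
      noncomm_ring
    have hMid : M = Θᵀ * 1 * Θ := by rw [Matrix.mul_one, hM]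
    rw [hMdot]
    rw [Matrix.mul_sub, Matrix.sub_mul, Matrix.mul_add Θᵀ Fg Fgᵀ, Matrix.add_mul,
      h1, h2]
    rw [Matrix.mul_smul, Matrix.smul_mul, ← hMid]
    abel
  -- conjugate to get PSD of the Fg expression
  have hpsd : ((-(2 * α)) • (1 : Matrix (Fin n) (Fin n) ℝ) - (Fg + Fgᵀ)).PosSemidef := by
    have h := hcontract.conjTranspose_mul_mul_same Θ⁻¹
    rw [← key] at h
    have e : (Θ⁻¹)ᴴ * (Θᵀ * ((-(2 * α)) • (1 : Matrix (Fin n) (Fin n) ℝ) - (Fg + Fgᵀ)) * Θ) * Θ⁻¹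
        = (-(2 * α)) • (1 : Matrix (Fin n) (Fin n) ℝ) - (Fg + Fgᵀ) := by
      have hconjT : (Θ⁻¹)ᴴ = (Θᵀ)⁻¹ := by
        simp [Matrix.conjTranspose_eq_transpose_of_trivial, Matrix.transpose_nonsing_inv]
      have hTinv : (Θᵀ)⁻¹ * Θᵀ = 1 := by
        rw [Matrix.nonsing_inv_mul _ (by simpa [Matrix.det_transpose] using hdet)]
      rw [hconjT]
      simp only [Matrix.mul_assoc]
      rw [hinv', Matrix.mul_one, ← Matrix.mul_assoc, hTinv, Matrix.one_mul]
    rwa [e] at h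
  intro i
  set v : Fin n → ℝ := ⇑(hsym.eigenvectorBasis i) with hv
  have hnorm : dotProduct (star v) v = 1 := by
    have := hsym.eigenvectorBasis.orthonormal.1 i
    have h2 : (inner ℝ (hsym.eigenvectorBasis i) (hsym.eigenvectorBasis i) : ℝ) = 1 := by
      rw [real_inner_self_eq_norm_sq, this]; norm_num
    rw [EuclideanSpace.inner_eq_star_dotProduct, dotProduct_comm] at h2
    exact h2
  have heig : hsym.eigenvalues i
      = dotProduct (star v) (((1 / 2 : ℝ) • (Fg + Fgᵀ)) *ᵥ v) := by
    rw [hsym.eigenvalues_eq i]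
    simp only [RCLike.re_to_real]
    rfl
  have h0 := hpsd.dotProduct_mulVec_nonneg v
  rw [Matrix.sub_mulVec, dotProduct_sub, Matrix.smul_mulVec,
    Matrix.one_mulVec, dotProduct_smul] at h0
  have hq : dotProduct (star v) ((Fg + Fgᵀ) *ᵥ v) = 2 * hsym.eigenvalues i := by
    rw [heig, Matrix.smul_mulVec, dotProduct_smul]
    ring_nf
  rw [hq, hnorm, smul_eq_mul, mul_one] at h0
  linarith
end

section
/- Suppose the symmetric matrix inequality F(t,x)ᵀM(t,x) + M(t,x)F(t,x) + Ṁ(t,x) ≤ -2α M(t,x) holds along trajectories, with M uniformly positive definite with m·I ≤ M ≤ M̄·I. If V(t) = δx(t)ᵀ M(t, x(t)) δx(t) where δx solves δx' = F δx, then V(t) ≤ V(0)e^{-2αt}, and hence ‖δx(t)‖ ≤ √(M̄/m)·‖δx(0)‖·e^{-αt}. -/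
open Matrix

theorem contraction_implies_incremental_stability
    (n : ℕ) (F M Mdot : ℝ → Matrix (Fin n) (Fin n) ℝ)
    (α m Mbar : ℝ) (hα : 0 < α) (hm : 0 < m) (hmM : m ≤ Mbar)
    (hMderiv : ∀ t i j, HasDerivAt (fun s => M s i j) (Mdot t i j) t)
    (hlow : ∀ t, (M t - m • (1 : Matrix (Fin n) (Fin n) ℝ)).PosSemidef)
    (hhigh : ∀ t, (Mbar • (1 : Matrix (Fin n) (Fin n) ℝ) - M t).PosSemidef)
    (hcontract : ∀ t,
      ((-(2 * α)) • M t - ((F t)ᵀ * M t + M t * F t + Mdot t)).PosSemidef)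
    (δx : ℝ → Fin n → ℝ)
    (hδx : ∀ t i, HasDerivAt (fun s => δx s i) ((F t).mulVec (δx t) i) t)
    (V : ℝ → ℝ) (hV : ∀ t, V t = δx t ⬝ᵥ (M t).mulVec (δx t)) :
    ∀ t ≥ 0, V t ≤ V 0 * Real.exp (-(2 * α) * t) ∧
      ‖(WithLp.equiv 2 (Fin n → ℝ)).symm (δx t)‖ ≤
        Real.sqrt (Mbar / m) * ‖(WithLp.equiv 2 (Fin n → ℝ)).symm (δx 0)‖ *
          Real.exp (-α * t) := by
  -- derivative of V
  have key : ∀ s, HasDerivAt V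
      ((F s *ᵥ δx s) ⬝ᵥ (M s *ᵥ δx s) + δx s ⬝ᵥ (Mdot s *ᵥ δx s)
        + δx s ⬝ᵥ (M s *ᵥ (F s *ᵥ δx s))) s := by
    intro s
    have h : HasDerivAt (fun u => ∑ i, δx u i * ∑ j, M u i j * δx u j)
        (∑ i, ((F s *ᵥ δx s) i * (∑ j, M s i j * δx s j)
          + δx s i * (∑ j, (Mdot s i j * δx s j + M s i j * (F s *ᵥ δx s) j)))) s := by
      apply HasDerivAt.fun_sum
      intro i _
      exact (hδx s i).mul (HasDerivAt.fun_sum fun j _ => (hMderiv s i j).mul (hδx s j))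
    have hfun : (fun u => ∑ i, δx u i * ∑ j, M u i j * δx u j) = V := by
      funext u; rw [hV u]; rfl
    rw [hfun] at h
    convert h using 1
    simp [dotProduct, mulVec, Finset.sum_add_distrib, Finset.mul_sum, mul_add]
    ring_nf
  have hVd : ∀ s, HasDerivAt V
      (δx s ⬝ᵥ (((F s)ᵀ * M s + M s * F s + Mdot s) *ᵥ δx s)) s := by
    intro s
    convert key s using 1
    rw [Matrix.add_mulVec, Matrix.add_mulVec, dotProduct_add, dotProduct_add,
      ← Matrix.mulVec_mulVec, ← Matrix.mulVec_mulVec,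
      Matrix.dotProduct_mulVec (δx s) ((F s)ᵀ), Matrix.vecMul_transpose]
    ring
  -- bound on the derivative
  have hbound : ∀ s, δx s ⬝ᵥ (((F s)ᵀ * M s + M s * F s + Mdot s) *ᵥ δx s)
      ≤ (-(2 * α)) * V s := by
    intro s
    have h := (hcontract s).dotProduct_mulVec_nonneg (δx s)
    rw [star_trivial, Matrix.sub_mulVec, dotProduct_sub, Matrix.smul_mulVec,
      dotProduct_smul, smul_eq_mul, sub_nonneg] at h
    rw [hV s]; exact h
  intro t ht
  -- Grönwall
  have hVle : V t ≤ V 0 * Real.exp (-(2 * α) * t) := by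
    have hg := le_gronwallBound_of_liminf_deriv_right_le
      (f := V) (f' := fun s => δx s ⬝ᵥ (((F s)ᵀ * M s + M s * F s + Mdot s) *ᵥ δx s))
      (δ := V 0) (K := -(2 * α)) (ε := 0) (a := 0) (b := t)
      (fun s _ => (hVd s).continuousAt.continuousWithinAt)
      (fun x _ r hr => (hVd x).hasDerivWithinAt.liminf_right_slope_le hr)
      le_rfl
      (fun x _ => by rw [add_zero]; exact hbound x)
      t ⟨ht, le_rfl⟩
    rwa [sub_zero, gronwallBound_ε0] at hg
  refine ⟨hVle, ?_⟩
  -- norms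
  have hnormsq : ∀ s, ‖(WithLp.equiv 2 (Fin n → ℝ)).symm (δx s)‖ ^ 2 = δx s ⬝ᵥ δx s := by
    intro s
    rw [EuclideanSpace.norm_eq, Real.sq_sqrt (by positivity)]
    simp [dotProduct, sq, Real.norm_eq_abs, abs_mul_abs_self]
  have hlow' : m * (δx t ⬝ᵥ δx t) ≤ V t := by
    have h := (hlow t).dotProduct_mulVec_nonneg (δx t)
    rw [star_trivial, Matrix.sub_mulVec, dotProduct_sub, Matrix.smul_mulVec,
      dotProduct_smul, smul_eq_mul, Matrix.one_mulVec, sub_nonneg] at h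
    rw [hV t]; exact h
  have hhigh' : V 0 ≤ Mbar * (δx 0 ⬝ᵥ δx 0) := by
    have h := (hhigh 0).dotProduct_mulVec_nonneg (δx 0)
    rw [star_trivial, Matrix.sub_mulVec, dotProduct_sub, Matrix.smul_mulVec,
      dotProduct_smul, smul_eq_mul, Matrix.one_mulVec, sub_nonneg] at h
    rw [hV 0]; exact h
  set Nt := ‖(WithLp.equiv 2 (Fin n → ℝ)).symm (δx t)‖ with hNt
  set N0 := ‖(WithLp.equiv 2 (Fin n → ℝ)).symm (δx 0)‖ with hN0
  have hsq : Nt ^ 2 ≤ (Real.sqrt (Mbar / m) * N0 * Real.exp (-α * t)) ^ 2 := by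
    have h1 : m * Nt ^ 2 ≤ Mbar * N0 ^ 2 * Real.exp (-(2 * α) * t) := by
      rw [hnormsq, hnormsq]
      calc m * (δx t ⬝ᵥ δx t) ≤ V t := hlow'
        _ ≤ V 0 * Real.exp (-(2 * α) * t) := hVle
        _ ≤ Mbar * (δx 0 ⬝ᵥ δx 0) * Real.exp (-(2 * α) * t) := by
            exact mul_le_mul_of_nonneg_right hhigh' (Real.exp_nonneg _)
    have h2 : (Real.sqrt (Mbar / m) * N0 * Real.exp (-α * t)) ^ 2
        = Mbar / m * N0 ^ 2 * Real.exp (-(2 * α) * t) := by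
      have he : Real.exp (-α * t) ^ 2 = Real.exp (-(2 * α) * t) := by
        rw [sq, ← Real.exp_add]; ring_nf
      rw [mul_pow, mul_pow, Real.sq_sqrt (div_nonneg (hm.le.trans hmM) hm.le), he]
    rw [h2]
    rw [div_mul_eq_mul_div, div_mul_eq_mul_div, le_div_iff₀ hm]
    nlinarith [h1]
  have hrhs : 0 ≤ Real.sqrt (Mbar / m) * N0 * Real.exp (-α * t) := by positivity
  nlinarith [norm_nonneg ((WithLp.equiv 2 (Fin n → ℝ)).symm (δx t)), hsq, hrhs]
end
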